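/- arXiv:2004.08357 — 2 statements merged into one kernel-verified Lean document; each statement's English description precedes it below -/
import Mathlib

section
/- Let (M, g) be a semi-Riemannian manifold admitting a smooth proper nonnegative convex function f : M → ℝ. Then (M, g) is geodesically pseudoconvex: for every compact set K ⊆ M there exists a compact set K* ⊆ M such that every geodesic segment with both endpoints in K is entirely contained in K*. (One may take K* = f⁻¹([0, A]) where A = max of f on K.) -/
/-- A semi-Riemannian manifold admitting a smooth proper nonnegative convex function
`f : M → ℝ` is geodesically pseudoconvex: for every compact `K ⊆ M` there is a compact
`K* ⊆ M` containing every geodesic segment with both endpoints in `K`.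

The manifold is encoded as a Hausdorff topological space together with an abstract
predicate `IsGeodesic` singling out its (affinely parametrized) geodesics; convexity of
`f` is encoded through its standard consequence that along every geodesic segment `f` is
bounded by its values at the endpoints (since `(f ∘ γ)'' ≥ 0`). -/
theorem pseudoconvex_of_proper_convex_function
    {M : Type*} [TopologicalSpace M] [T2Space M]
    (IsGeodesic : (ℝ → M) → Prop)
    (f : M → ℝ) (hfcont : Continuous f)
    -- `f` is proper
    (hfproper : ∀ K : Set ℝ, IsCompact K → IsCompact (f ⁻¹' K))
    -- `f` is nonnegative
    (hfpos : ∀ x : M, 0 ≤ f x)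
    -- `f` is convex: along every geodesic, `f` is bounded by its endpoint values
    (hconv : ∀ γ, IsGeodesic γ → ∀ a b : ℝ, a ≤ b →
      ∀ t ∈ Set.Icc a b, f (γ t) ≤ max (f (γ a)) (f (γ b))) :
    ∀ K : Set M, IsCompact K → ∃ Kstar : Set M, IsCompact Kstar ∧
      ∀ γ, IsGeodesic γ → ∀ a b : ℝ, a ≤ b → γ a ∈ K → γ b ∈ K →
        ∀ t ∈ Set.Icc a b, γ t ∈ Kstar := by
  intro K hK
  rcases K.eq_empty_or_nonempty with rfl | hne
  · exact ⟨∅, isCompact_empty, fun γ _ a b _ ha => ha.elim⟩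
  obtain ⟨x, hxK, hmax⟩ := hK.exists_isMaxOn hne hfcont.continuousOn
  refine ⟨f ⁻¹' Set.Icc 0 (f x), hfproper _ isCompact_Icc, ?_⟩
  intro γ hγ a b hab haK hbK t ht
  refine ⟨hfpos _, ?_⟩
  exact (hconv γ hγ a b hab t ht).trans (max_le (hmax haK) (hmax hbK))
end

section
/- Let F : N → M be a smooth map between smooth manifolds of the same dimension, and let 𝒮 ⊆ N be the set of points where the differential of F is singular. Then F(𝒮) has measure zero in M; in particular, if U ⊆ M is a nonempty open set, then U is not contained in F(𝒮), i.e., U ∖ F(𝒮) is nonempty. -/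
/-!
Read in charts `φ` at `x` and `ψ` at `y`, the map `ψ ∘ F ∘ φ⁻¹` has derivative
`dψ ∘ dF ∘ dφ⁻¹`, whose determinant vanishes wherever `dF` is singular, so by the
equidimensional Sard lemma for maps `E → E` (`addHaar_image_eq_zero_of_det_fderivWithin_eq_zero`)
each chart domain contributes a null set of critical values. Second countability of `N` reduces
to countably many chart domains. An open set has positive measure in a chart, so it cannot
consist of critical values.
-/

open MeasureTheory Set Filter Function
open scoped Manifold Topology

theorem ContinuousLinearMap.det_eq_zero_of_not_bijective {𝕜 V : Type*} [Field 𝕜]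
    [AddCommGroup V] [Module 𝕜 V] [TopologicalSpace V] [FiniteDimensional 𝕜 V]
    (f : V →L[𝕜] V) (hf : ¬ Bijective f) : f.det = 0 := by
  by_contra h
  exact hf ((f : V →ₗ[𝕜] V).equivOfDetNeZero h).bijective

theorem ContinuousLinearMap.det_comp {R V : Type*} [CommRing R] [AddCommGroup V] [Module R V]
    [TopologicalSpace V] (f g : V →L[R] V) : (f.comp g).det = f.det * g.det :=
  LinearMap.det_comp _ _

section Manifold

variable {E H N M : Type*} [NormedAddCommGroup E] [NormedSpace ℝ E] [TopologicalSpace H]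
  {I : ModelWithCorners ℝ E H} [TopologicalSpace N] [ChartedSpace H N]
  [TopologicalSpace M] [ChartedSpace H M]

variable (I) in
def criticalPoints (F : N → M) : Set N := {x | ¬ Bijective (mfderiv I I F x)}

theorem hasFDerivWithinAt_extChartAt_comp_comp_extChartAt_symm [IsManifold I 1 N]
    [IsManifold I 1 M] {F : N → M} {x : N} {y : M} {p : E} (hp : p ∈ (extChartAt I x).target)
    (hF : MDifferentiableAt I I F ((extChartAt I x).symm p))
    (hFp : F ((extChartAt I x).symm p) ∈ (extChartAt I y).source) :
    HasFDerivWithinAt (extChartAt I y ∘ F ∘ (extChartAt I x).symm)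
      ((mfderiv I 𝓘(ℝ, E) (extChartAt I y) (F ((extChartAt I x).symm p))).comp
        ((mfderiv I I F ((extChartAt I x).symm p)).comp
          (mfderivWithin 𝓘(ℝ, E) I (extChartAt I x).symm (range I) p)))
      (range I) p := by
  rw [extChartAt_source] at hFp
  exact hasMFDerivWithinAt_iff_hasFDerivWithinAt.mp
    (((mdifferentiableAt_extChartAt hFp).hasMFDerivAt.comp _ hF.hasMFDerivAt)
      |>.comp_hasMFDerivWithinAt _ (mdifferentiableWithinAt_extChartAt_symm hp).hasMFDerivWithinAt)

theorem interior_eq_empty_of_measure_extChartAt_image_eq_zero [I.Boundaryless]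
    [MeasurableSpace E] (μ : Measure E) [μ.IsOpenPosMeasure] {T : Set M}
    (hT : ∀ y, μ (extChartAt I y '' (T ∩ (extChartAt I y).source)) = 0) : interior T = ∅ := by
  refine eq_empty_of_forall_notMem fun y hy => ?_
  set ψ := extChartAt I y
  have hopen : IsOpen (ψ '' (interior T ∩ ψ.source)) := by
    rw [inter_comm, ψ.image_source_inter_eq]
    exact (continuousOn_extChartAt_symm y).isOpen_inter_preimage (isOpen_extChartAt_target y)
      ((isOpen_extChartAt_source y).inter isOpen_interior)
  have hnull : μ (ψ '' (interior T ∩ ψ.source)) = 0 :=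
    measure_mono_null (image_mono (inter_subset_inter_left _ interior_subset)) (hT y)
  exact (hopen.measure_pos μ ⟨ψ y, mem_image_of_mem ψ ⟨hy, mem_extChartAt_source y⟩⟩).ne' hnull

variable [FiniteDimensional ℝ E] [MeasurableSpace E] [BorelSpace E] (μ : Measure E)
  [μ.IsAddHaarMeasure]

theorem addHaar_image_criticalPoints_inter_extChartAt_source_eq_zero [IsManifold I 1 N]
    [IsManifold I 1 M] {F : N → M} (hF : MDifferentiable I I F) (x' : N) (y : M) :
    μ ((extChartAt I y ∘ F) ''
      (criticalPoints I F ∩ F ⁻¹' (extChartAt I y).source ∩ (extChartAt I x').source)) = 0 := by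
  set φ := extChartAt I x'
  rw [← φ.symm_image_image_of_subset_source inter_subset_right, ← image_comp]
  refine addHaar_image_eq_zero_of_det_fderivWithin_eq_zero μ
    (f' := fun p => ((mfderiv I 𝓘(ℝ, E) (extChartAt I y) (F (φ.symm p))).comp
      ((mfderiv I I F (φ.symm p)).comp (mfderivWithin 𝓘(ℝ, E) I φ.symm (range I) p)) :
        E →L[ℝ] E)) ?_ ?_
  · rintro _ ⟨x, ⟨⟨-, hFx⟩, hx⟩, rfl⟩
    rw [← φ.left_inv hx] at hFx
    exact (hasFDerivWithinAt_extChartAt_comp_comp_extChartAt_symm (φ.map_source hx) (hF _)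
      hFx).mono (image_subset_iff.2 fun z hz =>
        extChartAt_target_subset_range x' (φ.map_source hz.2))
  · rintro _ ⟨x, ⟨⟨hcrit, -⟩, hx⟩, rfl⟩
    rw [← φ.left_inv hx] at hcrit
    -- `TangentSpace I _` is a type synonym for `E` that does not inherit this instance.
    have : FiniteDimensional ℝ (TangentSpace I (φ.symm (φ x))) := ‹FiniteDimensional ℝ E›
    have hdet := ContinuousLinearMap.det_eq_zero_of_not_bijective _ hcrit
    erw [ContinuousLinearMap.det_comp, ContinuousLinearMap.det_comp, hdet, zero_mul, mul_zero]

theorem addHaar_extChartAt_image_criticalValues_eq_zero [SecondCountableTopology N]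
    [IsManifold I 1 N] [IsManifold I 1 M] {F : N → M} (hF : MDifferentiable I I F) (y : M) :
    μ (extChartAt I y '' (F '' criticalPoints I F ∩ (extChartAt I y).source)) = 0 := by
  rw [← image_inter_preimage, ← image_comp]
  -- Pull `μ` back along `ψ ∘ F` to an outer measure on the second countable space `N`.
  refine (OuterMeasure.comap_apply _ μ.toOuterMeasure _).symm.trans
    (measure_null_of_locally_null _ fun x _ =>
      ⟨_, inter_mem_nhdsWithin _ (extChartAt_source_mem_nhds (I := I) x), ?_⟩)
  exact (OuterMeasure.comap_apply _ _ _).trans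
    (addHaar_image_criticalPoints_inter_extChartAt_source_eq_zero μ hF x y)

end Manifold

theorem sard_critical_values_measure_zero_general
    {n : ℕ} {N M : Type*}
    [TopologicalSpace N] [ChartedSpace (EuclideanSpace ℝ (Fin n)) N]
    [IsManifold (𝓡 n) (⊤ : ℕ∞) N] [SecondCountableTopology N]
    [TopologicalSpace M] [ChartedSpace (EuclideanSpace ℝ (Fin n)) M]
    [IsManifold (𝓡 n) (⊤ : ℕ∞) M]
    (F : N → M) (hF : ContMDiff (𝓡 n) (𝓡 n) (⊤ : ℕ∞) F)
    (S : Set N) (hS : S = {x : N | ¬ Function.Bijective (mfderiv (𝓡 n) (𝓡 n) F x)}) :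
    (∀ y : M, volume ((extChartAt (𝓡 n) y) ''
        (F '' S ∩ (extChartAt (𝓡 n) y).source)) = 0) ∧
    (∀ U : Set M, IsOpen U → U.Nonempty → (U \ F '' S).Nonempty) := by
  subst hS
  have hnull := addHaar_extChartAt_image_criticalValues_eq_zero volume
    (hF.mdifferentiable (by simp))
  refine ⟨hnull, fun U hU hne => sdiff_nonempty.2 fun hsub => ?_⟩
  have hint := interior_eq_empty_of_measure_extChartAt_image_eq_zero volume hnull
  exact hne.ne_empty (subset_eq_empty (interior_maximal hsub hU) hint)

/-- Sard-type statement: if `F : N → M` is a smooth map between smooth `n`-manifolds and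
`𝒮` is its set of singular points (where `dF` is not invertible), then `F(𝒮)` has
measure zero in `M` (read in every chart, w.r.t. Lebesgue measure on the model
`ℝⁿ`); in particular every nonempty open `U ⊆ M` satisfies `U ∖ F(𝒮) ≠ ∅`. -/
theorem sard_critical_values_measure_zero
    {n : ℕ} {N M : Type*}
    [TopologicalSpace N] [ChartedSpace (EuclideanSpace ℝ (Fin n)) N]
    [IsManifold (𝓡 n) (⊤ : ℕ∞) N] [T2Space N] [SecondCountableTopology N]
    [TopologicalSpace M] [ChartedSpace (EuclideanSpace ℝ (Fin n)) M]
    [IsManifold (𝓡 n) (⊤ : ℕ∞) M] [T2Space M] [SecondCountableTopology M]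
    (F : N → M) (hF : ContMDiff (𝓡 n) (𝓡 n) (⊤ : ℕ∞) F)
    (S : Set N) (hS : S = {x : N | ¬ Function.Bijective (mfderiv (𝓡 n) (𝓡 n) F x)}) :
    (∀ y : M, volume ((extChartAt (𝓡 n) y) ''
        (F '' S ∩ (extChartAt (𝓡 n) y).source)) = 0) ∧
    (∀ U : Set M, IsOpen U → U.Nonempty → (U \ F '' S).Nonempty) :=
  sard_critical_values_measure_zero_general F hF S hS
end
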